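/- arXiv:1308.2474 — 3 statements merged into one kernel-verified Lean document; each statement's English description precedes it below -/
import Mathlib

section
/- The dihedral twist angle of the tetrahelix (Boerdijk–Coxeter helix), θ = arccos(−2/3), is an irrational multiple of π; consequently the tetrahelix has no translational period that returns a vertex to a rotated copy of itself by a rational turn. -/
private def tetA : ℕ → ℤ
  | 0 => 1
  | 1 => -2
  | (n+2) => -4 * tetA (n+1) - 9 * tetA n

private lemma tetA_not_dvd : ∀ n : ℕ, ¬ (3 ∣ tetA (n+1)) := by
  have key : ∀ n : ℕ, ¬ (3 ∣ tetA (n+1)) ∧ ¬ (3 ∣ tetA (n+2)) := by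
    intro n
    induction n with
    | zero => constructor <;> decide
    | succ k ih =>
      refine ⟨ih.2, ?_⟩
      show ¬ (3 ∣ (-4 * tetA (k+2) - 9 * tetA (k+1)))
      have := ih.2
      omega
  exact fun n => (key n).1

private lemma tetA_cos : ∀ n : ℕ,
    Real.cos (n * Real.arccos (-2 / 3)) = tetA n / 3 ^ n := by
  have hcos : Real.cos (Real.arccos (-2 / 3)) = -2 / 3 :=
    Real.cos_arccos (by norm_num) (by norm_num)
  set θ := Real.arccos (-2 / 3) with hθ
  have key : ∀ n : ℕ, Real.cos (n * θ) = tetA n / 3 ^ n ∧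
      Real.cos ((n+1) * θ) = tetA (n+1) / 3 ^ (n+1) := by
    intro n
    induction n with
    | zero =>
      constructor
      · simp [tetA]
      · simpa [tetA] using hcos
    | succ k ih =>
      refine ⟨by exact_mod_cast ih.2, ?_⟩
      have trig : Real.cos ((k+2 : ℕ) * θ) =
          2 * Real.cos ((k+1 : ℕ) * θ) * Real.cos θ - Real.cos ((k : ℕ) * θ) := by
        have h1 := Real.cos_add ((k+1 : ℕ) * θ) θ
        have h2 := Real.cos_sub ((k+1 : ℕ) * θ) θ
        have e1 : ((k+1 : ℕ) : ℝ) * θ + θ = ((k+2 : ℕ) : ℝ) * θ := by push_cast; ring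
        have e2 : ((k+1 : ℕ) : ℝ) * θ - θ = ((k : ℕ) : ℝ) * θ := by push_cast; ring
        rw [e1] at h1; rw [e2] at h2
        linarith
      have egoal : (((k+1 : ℕ) : ℝ) + 1) * θ = ((k+2 : ℕ) : ℝ) * θ := by push_cast; ring
      have ih2 : Real.cos (((k+1 : ℕ) : ℝ) * θ) = tetA (k+1) / 3 ^ (k+1) := by
        exact_mod_cast ih.2
      rw [show ((k+1)+1) = k+2 from rfl, egoal, trig, ih.1, ih2, hcos]
      show _ = (tetA (k+2) : ℝ) / 3 ^ (k+2)
      have : tetA (k+2) = -4 * tetA (k+1) - 9 * tetA k := rfl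
      rw [this]
      push_cast
      field_simp
      ring
  exact fun n => (key n).1

private lemma cos_ne_one : ∀ n : ℕ, 0 < n → Real.cos (n * Real.arccos (-2 / 3)) ≠ 1 := by
  intro n hn h
  rw [tetA_cos n] at h
  have h3 : (tetA n : ℝ) = 3 ^ n := by
    field_simp at h; exact_mod_cast h
  have h4 : tetA n = 3 ^ n := by exact_mod_cast h3
  obtain ⟨k, rfl⟩ := Nat.exists_eq_succ_of_ne_zero hn.ne'
  have := tetA_not_dvd k
  rw [h4] at this
  exact this (dvd_pow_self 3 (Nat.succ_ne_zero k))

/-- The twist angle `θ = arccos(−2/3)` of the tetrahelix is an irrational multiple of `π`;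
consequently no positive number of steps of the screw motion is a full rational number
of turns, i.e. the tetrahelix has no translational period returning a vertex to a
copy of itself rotated by a rational turn. -/
theorem tetrahelix_twist_irrational :
    Irrational (Real.arccos (-2 / 3) / Real.pi) ∧
      ∀ m : ℕ, 0 < m → ∀ q : ℚ, (m : ℝ) * Real.arccos (-2 / 3) ≠ 2 * Real.pi * q := by
  set θ := Real.arccos (-2 / 3) with hθ
  have hpi := Real.pi_ne_zero
  constructor
  · rintro ⟨r, hr⟩
    have hθeq : θ = r * Real.pi := by
      field_simp at hr; linarith [hr]
    have hden : ((r.den : ℚ) * r : ℚ) = (r.num : ℚ) := Rat.mul_den_eq_num r ▸ mul_comm r (r.den:ℚ) ▸ rfl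
    have hn : ((2 * r.den : ℕ) : ℝ) * θ = (r.num : ℤ) * (2 * Real.pi) := by
      rw [hθeq]
      have : ((r.den : ℝ) * r) = (r.num : ℝ) := by exact_mod_cast hden
      push_cast
      linear_combination 2 * Real.pi * this
    have hone : Real.cos (((2 * r.den : ℕ) : ℝ) * θ) = 1 := by
      rw [hn]; exact Real.cos_int_mul_two_pi r.num
    exact cos_ne_one (2 * r.den) (by positivity) hone
  · intro m hm q hq
    have hden : ((q.den : ℚ) * q : ℚ) = (q.num : ℚ) := Rat.mul_den_eq_num q ▸ mul_comm q (q.den:ℚ) ▸ rfl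
    have hn : ((m * q.den : ℕ) : ℝ) * θ = (q.num : ℤ) * (2 * Real.pi) := by
      have : ((q.den : ℝ) * q) = (q.num : ℝ) := by exact_mod_cast hden
      push_cast
      linear_combination (q.den : ℝ) * hq + 2 * Real.pi * this
    have hone : Real.cos (((m * q.den : ℕ) : ℝ) * θ) = 1 := by
      rw [hn]; exact Real.cos_int_mul_two_pi q.num
    exact cos_ne_one (m * q.den) (by positivity) hone
end

section
/- arccos(−2/3)/π is irrational. -/
private def aSeq : ℕ → ℤ
  | 0 => 1
  | 1 => -2
  | (n+2) => -4 * aSeq (n+1) - 9 * aSeq n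

private lemma aSeq_not_dvd : ∀ n, ¬ (3 : ℤ) ∣ aSeq n ∧ ¬ (3 : ℤ) ∣ aSeq (n+1) := by
  intro n
  induction n with
  | zero => constructor <;> decide
  | succ k ih =>
    refine ⟨ih.2, ?_⟩
    show ¬ (3:ℤ) ∣ (-4 * aSeq (k+1) - 9 * aSeq k)
    intro h
    apply ih.2
    have h2 : (3:ℤ) ∣ -4 * aSeq (k+1) := by
      have h9 : (3:ℤ) ∣ 9 * aSeq k := ⟨3 * aSeq k, by ring⟩
      omega
    rcases h2 with ⟨c, hc⟩
    exact ⟨-c - aSeq (k+1), by linarith⟩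

private lemma cos_nθ (θ : ℝ) (hθ : Real.cos θ = -2/3) :
    ∀ n : ℕ, Real.cos (n * θ) = aSeq n / 3 ^ n ∧
      Real.cos ((n+1) * θ) = aSeq (n+1) / 3 ^ (n+1) := by
  intro n
  induction n with
  | zero => simp [aSeq, hθ]
  | succ k ih =>
    obtain ⟨ih1, ih2⟩ := ih
    have ih2' : Real.cos (((k:ℝ)+1) * θ) = aSeq (k+1) / 3 ^ (k+1) := by exact_mod_cast ih2
    constructor
    · exact_mod_cast ih2
    · have key : Real.cos (((k:ℝ)+1+1) * θ)
          = 2 * Real.cos θ * Real.cos (((k:ℝ)+1) * θ) - Real.cos ((k:ℝ) * θ) := by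
        have e1 : ((k:ℝ)+1+1) * θ = (((k:ℝ)+1) * θ) + θ := by ring
        have e2 : (k:ℝ) * θ = ((((k:ℝ)+1)) * θ) - θ := by ring
        rw [e1, e2, Real.cos_add, Real.cos_sub]; ring
      push_cast
      rw [key, ih1, ih2', hθ]
      have ha : aSeq (k+1+1) = -4 * aSeq (k+1) - 9 * aSeq k := rfl
      rw [ha]
      push_cast
      field_simp
      ring

/-- `arccos(−2/3)/π` is irrational. -/
theorem arccos_neg_two_thirds_div_pi_irrational :
    Irrational (Real.arccos (-2 / 3) / Real.pi) := by
  set θ := Real.arccos (-2/3) with hθdef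
  have hcos : Real.cos θ = -2/3 := Real.cos_arccos (by norm_num) (by norm_num)
  rintro ⟨q, hq⟩
  have hπ : (Real.pi : ℝ) ≠ 0 := Real.pi_ne_zero
  have hθ : θ = q * Real.pi := by
    field_simp at hq; linarith [hq]
  set n : ℕ := 2 * q.den with hn
  have hnθ : (n : ℝ) * θ = (q.num : ℤ) * (2 * Real.pi) := by
    have hd : ((q.den : ℝ)) * (q : ℝ) = (q.num : ℝ) := by
      have : ((q.den : ℚ)) * q = (q.num : ℚ) := by
        rw [mul_comm]; exact_mod_cast q.mul_den_eq_num
      exact_mod_cast congrArg (Rat.cast : ℚ → ℝ) this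
    have hnr : (n : ℝ) = 2 * q.den := by rw [hn]; push_cast; ring
    rw [hθ, hnr]
    linear_combination (2 * Real.pi) * hd
  have h1 : Real.cos ((n:ℝ) * θ) = 1 := by rw [hnθ]; exact Real.cos_int_mul_two_pi _
  have h2 := (cos_nθ θ hcos n).1
  rw [h1] at h2
  have h3 : (aSeq n : ℝ) = 3 ^ n := by
    field_simp at h2; linarith
  have h4 : aSeq n = 3 ^ n := by exact_mod_cast h3
  have h5 : (3:ℤ) ∣ aSeq n := by
    rw [h4]
    exact dvd_pow_self 3 (by positivity)
  exact (aSeq_not_dvd n).1 h5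
end

section
/- If cos θ is rational with denominator not in {1, 2} (in lowest terms), then θ/π is irrational (Niven's theorem variant). -/
/-- Key lemma: if `2 cos θ = r / s` with `r` coprime to `s` and `s > 0`, then for every
`n ≥ 1` we have `2 cos (n θ) = c / s ^ n` with `c` coprime to `s`. -/
lemma niven_key (θ : ℝ) (r : ℤ) (s : ℕ) (hs : 0 < s)
    (hrs : Nat.Coprime r.natAbs s) (hx : 2 * Real.cos θ = (r : ℝ) / (s : ℝ)) :
    ∀ n : ℕ, ∃ c : ℤ, 2 * Real.cos (n * θ) = (c : ℝ) / (s : ℝ) ^ n ∧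
      (1 ≤ n → Nat.Coprime c.natAbs s) := by
  have hs0 : (s : ℝ) ≠ 0 := Nat.cast_ne_zero.mpr hs.ne'
  have main : ∀ n : ℕ,
      (∃ c : ℤ, 2 * Real.cos (n * θ) = (c : ℝ) / (s : ℝ) ^ n ∧
        (1 ≤ n → Nat.Coprime c.natAbs s)) ∧
      (∃ c : ℤ, 2 * Real.cos ((n + 1 : ℕ) * θ) = (c : ℝ) / (s : ℝ) ^ (n + 1) ∧
        (1 ≤ n + 1 → Nat.Coprime c.natAbs s)) := by
    intro n
    induction n with
    | zero =>
      constructor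
      · exact ⟨2, by simp, by omega⟩
      · refine ⟨r, ?_, fun _ => hrs⟩
        simpa using hx
    | succ n ih =>
      obtain ⟨⟨c₀, hc₀, _⟩, ⟨c₁, hc₁, hcop₁⟩⟩ := ih
      have hcop₁' : Nat.Coprime c₁.natAbs s := hcop₁ (by omega)
      refine ⟨⟨c₁, hc₁, hcop₁⟩, ⟨r * c₁ - (s : ℤ) ^ 2 * c₀, ?_, fun _ => ?_⟩⟩
      · have trig : 2 * Real.cos ((n + 2 : ℕ) * θ) =
            (2 * Real.cos θ) * (2 * Real.cos ((n + 1 : ℕ) * θ)) - 2 * Real.cos (n * θ) := by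
          have h1 : ((n + 2 : ℕ) : ℝ) * θ = ((n + 1 : ℕ) : ℝ) * θ + θ := by push_cast; ring
          have h2 : ((n : ℕ) : ℝ) * θ = ((n + 1 : ℕ) : ℝ) * θ - θ := by push_cast; ring
          rw [h1, h2, Real.cos_add, Real.cos_sub]; ring
        rw [trig, hx, hc₁, hc₀]
        push_cast
        field_simp
        ring
      · have h1 : IsCoprime (r * c₁) (s : ℤ) := by
          exact IsCoprime.mul_left (Int.isCoprime_iff_gcd_eq_one.mpr hrs)
            (Int.isCoprime_iff_gcd_eq_one.mpr hcop₁')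
        have h2 : IsCoprime (r * c₁ - (s : ℤ) ^ 2 * c₀) (s : ℤ) := by
          have := h1.add_mul_left_left (-(s : ℤ) * c₀)
          rw [show r * c₁ - (s : ℤ) ^ 2 * c₀ = r * c₁ + (s : ℤ) * (-(s : ℤ) * c₀) by ring]
          exact this
        have := Int.isCoprime_iff_gcd_eq_one.mp h2
        simpa [Int.gcd] using this
  intro n
  exact (main n).1

/-- Niven's theorem variant: if `cos θ = p/q` in lowest terms with `q ≥ 3`,
then `θ/π` is irrational. -/
theorem niven_variant (θ : ℝ) (p : ℤ) (q : ℕ) (hq : 3 ≤ q)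
    (hcop : Nat.Coprime p.natAbs q) (h : Real.cos θ = (p : ℝ) / (q : ℝ)) :
    Irrational (θ / Real.pi) := by
  -- Produce r, s with 2 cos θ = r/s, gcd(r,s)=1, s ≥ 2.
  obtain ⟨r, s, hs2, hrs, hx⟩ :
      ∃ (r : ℤ) (s : ℕ), 2 ≤ s ∧ Nat.Coprime r.natAbs s ∧
        2 * Real.cos θ = (r : ℝ) / (s : ℝ) := by
    rcases Nat.even_or_odd q with hqe | hqo
    · -- q even: q = 2 * s, p odd
      obtain ⟨s, hsq⟩ := hqe
      refine ⟨p, s, by omega, ?_, ?_⟩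
      · have : s ∣ q := ⟨2, by omega⟩
        exact Nat.Coprime.coprime_dvd_right this hcop
      · rw [h]
        have hq0 : (q : ℝ) ≠ 0 := Nat.cast_ne_zero.mpr (by omega)
        have hs0 : (s : ℝ) ≠ 0 := Nat.cast_ne_zero.mpr (by omega)
        have : (q : ℝ) = 2 * s := by push_cast [hsq]; ring
        rw [this]
        field_simp
    · -- q odd
      refine ⟨2 * p, q, by omega, ?_, ?_⟩
      · have h2q : Nat.Coprime 2 q := Nat.coprime_two_left.mpr hqo
        have : (2 * p).natAbs = 2 * p.natAbs := by simp [Int.natAbs_mul]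
        rw [this]
        exact Nat.Coprime.mul h2q hcop
      · rw [h]; push_cast; ring
  have key := niven_key θ r s (by omega) hrs hx
  -- Now suppose θ/π is rational.
  rw [Irrational]
  intro ⟨a, ha⟩
  have hpi : Real.pi ≠ 0 := Real.pi_ne_zero
  have hθ : θ = (a : ℝ) * Real.pi := by
    field_simp at ha
    linarith [ha]
  set n : ℕ := 2 * a.den with hn
  have hden : (a.den : ℝ) ≠ 0 := Nat.cast_ne_zero.mpr a.pos.ne'
  have hnθ : (n : ℝ) * θ = (a.num : ℝ) * (2 * Real.pi) := by
    rw [hθ, hn]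
    push_cast
    rw [Rat.cast_def]
    field_simp
  have hcos : Real.cos ((n : ℝ) * θ) = 1 := by
    rw [hnθ]
    exact Real.cos_int_mul_two_pi a.num
  obtain ⟨c, hc, hcopn⟩ := key n
  have hn1 : 1 ≤ n := by have := a.pos; omega
  have hcopn' := hcopn hn1
  rw [hcos] at hc
  -- 2 = c / s^n, so c = 2 * s^n, contradicting coprimality since s ≥ 2.
  have hs0 : (s : ℝ) ≠ 0 := Nat.cast_ne_zero.mpr (by omega)
  have hceq : (c : ℝ) = 2 * (s : ℝ) ^ n := by
    field_simp at hc
    linarith [hc]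
  have hcint : c = 2 * (s : ℤ) ^ n := by exact_mod_cast hceq
  have hsdvd : (s : ℤ) ∣ c := by
    rw [hcint]
    exact Dvd.dvd.mul_left (dvd_pow_self _ (by omega)) 2
  have : s ∣ c.natAbs := by
    have := Int.natAbs_dvd_natAbs.mpr hsdvd
    simpa using this
  have hs1 : s ∣ Nat.gcd c.natAbs s := Nat.dvd_gcd this dvd_rfl
  rw [hcopn'] at hs1
  have := Nat.le_of_dvd one_pos hs1
  omega
end
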